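/- arXiv:2405.01854 — 2 statements merged into one kernel-verified Lean document; each statement's English description precedes it below -/
import Mathlib

section
/- Let π ∈ Sₙ and let πᵢ with i > 1 be a left-to-right minimum of π. Let j ≤ n be the largest index such that πᵢ = min(π₁,…,π_j). Then the (j−1)-th entry of s_{123,132}(π) equals πᵢ. -/
open scoped Classical

/-- `π` is a permutation of `{1,…,n}` presented as a list. -/
def IsPermOf (n : ℕ) (π : List ℕ) : Prop :=
  π.Perm ((List.range n).map (· + 1))

/-- 1-indexed entry of a list. -/
def ent (π : List ℕ) (i : ℕ) : ℕ := π.getD (i - 1) 0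

/-- `a` and `b` are order-isomorphic (same length, same relative order). -/
def isoBool (a b : List ℕ) : Bool :=
  (a.length == b.length) &&
    (List.range a.length).all fun i =>
      (List.range a.length).all fun j =>
        !(decide (i < j)) ||
          (decide (a.getD i 0 < a.getD j 0) == decide (b.getD i 0 < b.getD j 0))

/-- `l` contains a subsequence order-isomorphic to the pattern `p`. -/
def containsPat (l p : List ℕ) : Bool :=
  l.sublists.any fun t => isoBool t p

/-- One full run of the right-greedy pattern-avoiding stack machine.
`T` is the list of forbidden patterns; the stack is read top-to-bottom
(head = top).  Push is preferred whenever the resulting stack avoids all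
patterns in `T`; otherwise the top of the stack is popped to the output.
At the end the stack is emptied onto the output. -/
def sortRun (T : List (List ℕ)) : List ℕ → List ℕ → List ℕ → List ℕ
  | [], stack, out => out ++ stack
  | x :: rest, stack, out =>
    if T.all (fun p => !containsPat (x :: stack) p) then
      sortRun T rest (x :: stack) out
    else
      match stack with
      | [] => sortRun T rest [x] out
      | y :: st => sortRun T (x :: rest) st (out ++ [y])
termination_by inp stack _ => 2 * inp.length + stack.length
decreasing_by all_goals (simp only [List.length_cons]; omega)

/-- The generalized stack-sorting map `s_T`. -/
def sortT (T : List (List ℕ)) (π : List ℕ) : List ℕ := sortRun T π [] []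

/-- The stack-sorting map `s_{123,132}`. -/
def s132 (π : List ℕ) : List ℕ := sortT [[1, 2, 3], [1, 3, 2]] π

/-- `π_i` is a left-to-right minimum of `π` (1-indexed). -/
def IsLtrMin (π : List ℕ) (i : ℕ) : Prop :=
  1 ≤ i ∧ i ≤ π.length ∧ ∀ m, 1 ≤ m → m ≤ i → ent π i ≤ ent π m

/-- `π_i` is a valley of `π`. -/
def IsValley (π : List ℕ) (i : ℕ) : Prop :=
  IsLtrMin π i ∧ (i + 1 ≤ π.length → ¬ IsLtrMin π (i + 1)) ∧
    (i + 2 ≤ π.length → IsLtrMin π (i + 2))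

/-- Positions `i, i+1, …, i+j` of `π` form a valley-block: `π_{i+j}` is a
valley and `π_i > ⋯ > π_{i+j}` are the `j+1` smallest entries among
`π_1,…,π_{i+j}`. -/
def IsValleyBlock (π : List ℕ) (i j : ℕ) : Prop :=
  1 ≤ i ∧ i + j ≤ π.length ∧ IsValley π (i + j) ∧
    (∀ k, i ≤ k → k < i + j → ent π (k + 1) < ent π k) ∧
    (∀ m, 1 ≤ m → m < i → ent π i < ent π m)

/-- Auxiliary (fuelled) predicate: the positions `i, i+1, …, π.length` of `π`
decompose as an alternation `v̄₁ a₁ v̄₂ a₂ ⋯ v̄_j a_j` of valley-blocks and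
single entries. -/
def AltFromAux (π : List ℕ) : ℕ → ℕ → Prop
  | 0, i => i = π.length + 1
  | fuel + 1, i => i = π.length + 1 ∨
      ∃ j, IsValleyBlock π i j ∧ AltFromAux π fuel (i + j + 2)

/-- The suffix of `π` starting at position `i` is a (nonempty) alternation of
valley-blocks and single entries. -/
def AltDecomp (π : List ℕ) (i : ℕ) : Prop :=
  i ≤ π.length ∧ AltFromAux π (π.length + 1) i

/-- The valley-boundary `𝔅(π)`: the smallest index `i` such that the suffix
`π_i,…,π_n` is an alternation of valley-blocks and single entries, and
`π.length` if no such index exists. -/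
noncomputable def vBoundary (π : List ℕ) : ℕ :=
  if _h : ∃ i, 1 ≤ i ∧ AltDecomp π i then sInf {i | 1 ≤ i ∧ AltDecomp π i}
  else π.length

/-- The value `x` appears in the valley-region `π_{𝔅(π)},…,π_n` of `π`. -/
def InValleyRegion (π : List ℕ) (x : ℕ) : Prop :=
  ∃ i, vBoundary π ≤ i ∧ i ≤ π.length ∧ ent π i = x

/-- `π` is half-decreasing: `π_{n-1}, π_{n-3}, …` (⌊(n−1)/2⌋ entries) is the
identity `1, 2, …, ⌊(n−1)/2⌋`. -/
def HalfDecreasing (π : List ℕ) : Prop :=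
  ∀ k, 1 ≤ k → k ≤ (π.length - 1) / 2 → ent π (π.length + 1 - 2 * k) = k

/-- `π` is periodic under `s_{123,132}`. -/
def PeriodicS (π : List ℕ) : Prop := ∃ k, 1 ≤ k ∧ s132^[k] π = π

/-!
Put `v = π_i`. Every entry of `π_1 ⋯ π_j` other than `v` is larger than `v`, and `π_{j+1} < v`
when `j < n`. Reading `π_1 ⋯ π_{i-1}` leaves a nonempty stack of entries above `v`; pushing `v`
pops all of it except its bottom entry `b`. Afterwards `v b` stays at the bottom of the stack,
because an entry larger than `v` may always be pushed onto `v b`. Output and stack together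
always hold exactly the entries read, so once `π_1 ⋯ π_j` are read the stack is `A v b` with
`j - 2` entries in the output and `A` together. The next entry `π_{j+1} < v` (or the end of the
input) flushes `A` and then `v`, which is therefore output in position `j - 1`.
-/

lemma List.exists_take_eq_append_getElem_cons {α : Type*} (l : List α) {k m : ℕ} (hkm : k < m)
    (hm : m ≤ l.length) : ∃ pre mid, l.take m = pre ++ l[k] :: mid ∧ pre.length = k := by
  have hk : k < (l.take m).length := by simp only [List.length_take]; omega
  refine ⟨(l.take m).take k, (l.take m).drop (k + 1), ?_, by simp only [List.length_take]; omega⟩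
  conv_lhs => rw [← List.take_append_drop k (l.take m), List.drop_eq_getElem_cons hk]
  rw [List.getElem_take]

lemma ent_succ (π : List ℕ) {k : ℕ} (hk : k < π.length) : ent π (k + 1) = π[k] := by
  simp [ent, hk]

section StackSorting

open List

lemma exists_append_cons_of_append_eq {α : Type*} {S₁ S₂ A : List α} {v b : α}
    (h : S₁ ++ S₂ = A ++ [v, b]) (hS₂ : S₂.length ≤ 1) : ∃ u, S₁ = A ++ v :: u := by
  rw [show A ++ [v, b] = (A ++ [v]) ++ [b] by simp] at h
  rcases append_eq_append_iff.1 h with ⟨a, h₁, h₂⟩ | ⟨c, h₁, -⟩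
  · obtain rfl : a = [] := by
      have := congrArg length h₂
      simp only [length_append, length_singleton] at this
      exact length_eq_zero_iff.1 (by omega)
    exact ⟨[], by simpa using h₁.symm⟩
  · exact ⟨c, by simp [h₁]⟩

abbrev avoided132 : List (List ℕ) := [[1, 2, 3], [1, 3, 2]]

/-- Stacks are listed top first; avoiding `123` and `132` means that no entry lies above
two larger ones. -/
def Admissible (l : List ℕ) : Prop :=
  ∀ a b c : ℕ, [a, b, c] <+ l → ¬(a < b ∧ a < c)

lemma admissible_of_length_le_two {l : List ℕ} (h : l.length ≤ 2) : Admissible l := by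
  intro a b c hs _
  have := hs.length_le
  simp only [length_cons, length_nil] at this
  omega

lemma admissible_triple {a b c : ℕ} (h : ¬(a < b ∧ a < c)) : Admissible [a, b, c] := by
  intro a' b' c' hs
  obtain ⟨rfl, rfl, rfl⟩ : a' = a ∧ b' = b ∧ c' = c := by simpa using hs.eq_of_length rfl
  exact h

lemma length_le_one_of_admissible {x : ℕ} {S : List ℕ} (h : Admissible (x :: S))
    (hS : ∀ y ∈ S, x < y) : S.length ≤ 1 := by
  match S, h with
  | [], _ => simp
  | [_], _ => simp
  | b :: c :: _, h =>
    exact absurd ⟨hS b (by simp), hS c (by simp)⟩ (h x b c (by simp))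

lemma isoBool_123_iff (a b c : ℕ) :
    isoBool [a, b, c] [1, 2, 3] = true ↔ a < b ∧ a < c ∧ b < c := by
  simp [isoBool, range_succ]; omega

lemma isoBool_132_iff (a b c : ℕ) :
    isoBool [a, b, c] [1, 3, 2] = true ↔ a < b ∧ a < c ∧ ¬b < c := by
  simp [isoBool, range_succ]; omega

lemma containsPat_iff_of_length_eq_three {l p : List ℕ} (hp : p.length = 3) :
    containsPat l p = true ↔ ∃ a b c, [a, b, c] <+ l ∧ isoBool [a, b, c] p = true := by
  simp only [containsPat, any_eq_true, mem_sublists]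
  constructor
  · rintro ⟨t, hs, hiso⟩
    have ht : t.length = 3 := by simp only [isoBool, Bool.and_eq_true, beq_iff_eq] at hiso; omega
    match t, ht with
    | [a, b, c], _ => exact ⟨a, b, c, hs, hiso⟩
  · rintro ⟨a, b, c, hs, hiso⟩
    exact ⟨_, hs, hiso⟩

lemma avoids_iff_admissible (l : List ℕ) :
    (avoided132.all fun p => !containsPat l p) = true ↔ Admissible l := by
  simp only [avoided132, all_cons, all_nil, Bool.and_true, Bool.and_eq_true,
    Bool.not_eq_true', ← Bool.not_eq_true]
  rw [containsPat_iff_of_length_eq_three rfl, containsPat_iff_of_length_eq_three rfl]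
  simp only [isoBool_123_iff, isoBool_132_iff]
  refine ⟨fun ⟨h123, h132⟩ a b c hs hab => ?_, fun h => ⟨?_, ?_⟩⟩
  · by_cases hbc : b < c
    · exact h123 ⟨a, b, c, hs, hab.1, hab.2, hbc⟩
    · exact h132 ⟨a, b, c, hs, hab.1, hab.2, hbc⟩
  · rintro ⟨a, b, c, hs, hab, hac, -⟩
    exact h a b c hs ⟨hab, hac⟩
  · rintro ⟨a, b, c, hs, hab, hac, -⟩
    exact h a b c hs ⟨hab, hac⟩

section Machine

variable (T : List (List ℕ))

lemma sortRun_nil (stack out : List ℕ) : sortRun T [] stack out = out ++ stack := by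
  rw [sortRun.eq_def]

lemma sortRun_push {x : ℕ} {rest stack : List ℕ} (out : List ℕ)
    (h : T.all (fun p => !containsPat (x :: stack) p) = true) :
    sortRun T (x :: rest) stack out = sortRun T rest (x :: stack) out := by
  rw [sortRun.eq_def]; simp [h]

lemma sortRun_pop {x y : ℕ} {rest st : List ℕ} (out : List ℕ)
    (h : T.all (fun p => !containsPat (x :: y :: st) p) = false) :
    sortRun T (x :: rest) (y :: st) out = sortRun T (x :: rest) st (out ++ [y]) := by
  rw [sortRun.eq_def]; simp [h]

lemma exists_sortRun_eq_append (inp stack out : List ℕ) :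
    ∃ t, sortRun T inp stack out = out ++ t := by
  induction inp, stack, out using sortRun.induct T with
  | case1 stack out => exact ⟨stack, sortRun_nil T stack out⟩
  | case2 x rest stack out h ih => rwa [sortRun_push T out h]
  | case3 x rest out h ih =>
    rw [sortRun.eq_def]
    simpa [Bool.eq_false_iff.2 h] using ih
  | case4 x rest out y st h ih =>
    obtain ⟨t, ht⟩ := ih
    exact ⟨y :: t, by rw [sortRun_pop T out (Bool.eq_false_iff.2 h), ht]; simp⟩

end Machine

lemma exists_sortRun_cons_eq (x : ℕ) (rest : List ℕ) : ∀ S out : List ℕ,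
    ∃ S₁ S₂, S₁ ++ S₂ = S ∧ Admissible (x :: S₂) ∧
      (∀ F, F <:+ S → Admissible (x :: F) → F <:+ S₂) ∧
      sortRun avoided132 (x :: rest) S out = sortRun avoided132 rest (x :: S₂) (out ++ S₁)
  | [], out =>
    have hx : Admissible [x] := admissible_of_length_le_two (by simp)
    ⟨[], [], rfl, hx, fun _ hF _ => hF,
      by rw [sortRun_push _ _ ((avoids_iff_admissible _).2 hx)]; simp⟩
  | y :: st, out => by
    by_cases h : Admissible (x :: y :: st)
    · exact ⟨[], y :: st, rfl, h, fun _ hF _ => hF,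
        by rw [sortRun_push _ _ ((avoids_iff_admissible _).2 h)]; simp⟩
    · obtain ⟨S₁, S₂, hS, hadm, hmax, hrun⟩ := exists_sortRun_cons_eq x rest st (out ++ [y])
      refine ⟨y :: S₁, S₂, by simp [hS], hadm, fun F hF hFadm => ?_, ?_⟩
      · rcases suffix_cons_iff.1 hF with rfl | hF
        · exact absurd hFadm h
        · exact hmax F hF hFadm
      · rw [sortRun_pop _ _ (Bool.eq_false_iff.2 (mt (avoids_iff_admissible _).1 h)), hrun]
        simp

lemma exists_sortRun_append_eq (Q : List ℕ → Prop) (rest : List ℕ) (pre : List ℕ)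
    (hQ : ∀ x ∈ pre, ∀ S₁ S₂, Q (S₁ ++ S₂) → Admissible (x :: S₂) →
      (∀ F, F <:+ S₁ ++ S₂ → Admissible (x :: F) → F <:+ S₂) → Q (x :: S₂))
    (S out : List ℕ) (hS : Q S) :
    ∃ S' out', sortRun avoided132 (pre ++ rest) S out = sortRun avoided132 rest S' (out ++ out') ∧
      Q S' ∧ out'.length + S'.length = S.length + pre.length := by
  induction pre generalizing S out with
  | nil => exact ⟨S, [], by simp, hS, by simp⟩
  | cons x pre ih =>
    obtain ⟨S₁, S₂, rfl, hadm, hmax, hrun⟩ := exists_sortRun_cons_eq x (pre ++ rest) S out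
    obtain ⟨S', out', hrun', hS', hlen⟩ :=
      ih (fun y hy => hQ y (by simp [hy])) (x :: S₂) (out ++ S₁)
        (hQ x (by simp) S₁ S₂ hS hadm hmax)
    refine ⟨S', S₁ ++ out', by rw [cons_append, hrun, hrun', append_assoc], hS', ?_⟩
    simp only [length_append, length_cons] at hlen ⊢
    omega

lemma exists_sortRun_append_cons_eq {v : ℕ} {pre : List ℕ} (hpre : pre ≠ [])
    (hgt : ∀ x ∈ pre, v < x) (rest : List ℕ) :
    ∃ b out, sortRun avoided132 (pre ++ v :: rest) [] [] = sortRun avoided132 rest [v, b] out ∧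
      v < b ∧ out.length + 1 = pre.length := by
  obtain ⟨p, pre, rfl⟩ := exists_cons_of_ne_nil hpre
  rw [cons_append,
    sortRun_push _ _ ((avoids_iff_admissible _).2 (admissible_of_length_le_two (by simp)))]
  obtain ⟨S, out, hrun, ⟨hSne, hSgt⟩, hlen⟩ :=
    exists_sortRun_append_eq (fun S => S ≠ [] ∧ ∀ y ∈ S, v < y) (v :: rest) pre
      (fun x hx S₁ S₂ hS _ _ => ⟨cons_ne_nil _ _, forall_mem_cons.2
        ⟨hgt x (mem_cons_of_mem _ hx), fun y hy => hS.2 y (mem_append_right _ hy)⟩⟩)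
      [p] [] ⟨cons_ne_nil _ _, by simpa using hgt p mem_cons_self⟩
  obtain ⟨S₁, S₂, hS, hadm, hmax, hrun'⟩ := exists_sortRun_cons_eq v rest S out
  obtain ⟨S₀, b, rfl⟩ := (eq_nil_or_concat' S).resolve_left hSne
  have hb : [b] <:+ S₂ := hmax [b] (suffix_append _ _) (admissible_of_length_le_two (by simp))
  have hS₂ : S₂.length ≤ 1 :=
    length_le_one_of_admissible hadm fun y hy => hSgt y (hS ▸ mem_append_right _ hy)
  obtain rfl : [b] = S₂ :=
    hb.eq_of_length (by have := hb.length_le; simp only [length_singleton] at *; omega)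
  refine ⟨b, out ++ S₁, by rw [hrun, nil_append, hrun'], hSgt b (by simp), ?_⟩
  have := congrArg length hS
  simp only [length_append, length_cons, length_nil] at this hlen ⊢
  omega

lemma exists_sortRun_append_eq_append_pair {v b : ℕ} {mid : List ℕ}
    (hgt : ∀ x ∈ mid, v < x) (rest out : List ℕ) :
    ∃ A out', sortRun avoided132 (mid ++ rest) [v, b] out =
        sortRun avoided132 rest (A ++ [v, b]) (out ++ out') ∧
      (∀ y ∈ A, v < y) ∧ out'.length + A.length = mid.length := by
  obtain ⟨S, out', hrun, ⟨A, rfl, hA⟩, hlen⟩ :=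
    exists_sortRun_append_eq (fun S => ∃ A, S = A ++ [v, b] ∧ ∀ y ∈ A, v < y) rest mid
      (fun x hx S₁ S₂ ⟨A, hS, hA⟩ _ hmax => by
        obtain ⟨A', rfl⟩ : [v, b] <:+ S₂ := hmax [v, b] (hS ▸ suffix_append _ _)
          (admissible_triple fun h => lt_asymm h.1 (hgt x hx))
        have hA' : S₁ ++ A' = A := append_cancel_right (by simpa using hS)
        exact ⟨x :: A', rfl, forall_mem_cons.2
          ⟨hgt x hx, fun y hy => hA y (hA' ▸ mem_append_right _ hy)⟩⟩)
      [v, b] out ⟨[], rfl, by simp⟩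
  refine ⟨A, out', hrun, hA, ?_⟩
  simp only [length_append, length_cons, length_nil] at hlen
  omega

lemma exists_sortRun_eq_append_cons_of_head_lt {v b : ℕ} (hvb : v < b) {A : List ℕ}
    (hA : ∀ y ∈ A, v < y) {rest : List ℕ} (hrest : ∀ x ∈ rest.head?, x < v) (out : List ℕ) :
    ∃ t, sortRun avoided132 rest (A ++ [v, b]) out = out ++ A ++ v :: t := by
  cases rest with
  | nil => exact ⟨[b], by rw [sortRun_nil]; simp⟩
  | cons x rest =>
    have hxv : x < v := hrest x rfl
    obtain ⟨S₁, S₂, hS, hadm, -, hrun⟩ := exists_sortRun_cons_eq x rest _ out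
    have hgt : ∀ y ∈ A ++ [v, b], x < y := by
      simp only [mem_append, mem_cons, not_mem_nil, or_false]
      rintro y (hy | rfl | rfl)
      · exact hxv.trans (hA y hy)
      · exact hxv
      · exact hxv.trans hvb
    obtain ⟨u, rfl⟩ := exists_append_cons_of_append_eq hS
      (length_le_one_of_admissible hadm fun y hy => hgt y (hS ▸ mem_append_right _ hy))
    obtain ⟨t, ht⟩ := exists_sortRun_eq_append avoided132 rest (x :: S₂) (out ++ (A ++ v :: u))
    exact ⟨u ++ t, by rw [hrun, ht]; simp⟩

theorem exists_sortRun_eq_append_cons {pre mid post : List ℕ} {v : ℕ} (hpre : pre ≠ [])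
    (hpre_gt : ∀ x ∈ pre, v < x) (hmid_gt : ∀ x ∈ mid, v < x)
    (hpost : ∀ x ∈ post.head?, x < v) :
    ∃ u t, sortRun avoided132 (pre ++ v :: mid ++ post) [] [] = u ++ v :: t ∧
      u.length + 1 = pre.length + mid.length := by
  obtain ⟨b, o₁, h₁, hvb, hl₁⟩ := exists_sortRun_append_cons_eq hpre hpre_gt (mid ++ post)
  obtain ⟨A, o₂, h₂, hA, hl₂⟩ := exists_sortRun_append_eq_append_pair (b := b) hmid_gt post o₁
  obtain ⟨t, h₃⟩ := exists_sortRun_eq_append_cons_of_head_lt hvb hA hpost (o₁ ++ o₂)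
  refine ⟨o₁ ++ o₂ ++ A, t, by rw [append_assoc, cons_append, h₁, h₂, h₃], ?_⟩
  simp only [length_append]
  omega

end StackSorting

lemma le_of_mem_take {π : List ℕ} {j v : ℕ} (hmin : ∀ m, 1 ≤ m → m ≤ j → v ≤ ent π m) :
    ∀ y ∈ π.take j, v ≤ y := by
  intro y hy
  obtain ⟨k, hk, rfl⟩ := List.mem_iff_getElem.1 hy
  rw [List.length_take] at hk
  rw [List.getElem_take, ← ent_succ π (by omega)]
  exact hmin (k + 1) (by omega) (by omega)

lemma lt_of_mem_head?_drop {π : List ℕ} {n j v : ℕ} (hn : π.length ≤ n)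
    (hmin : ∀ m, 1 ≤ m → m ≤ j → v ≤ ent π m)
    (hmax : ∀ j', j' ≤ n → (∀ m, 1 ≤ m → m ≤ j' → v ≤ ent π m) → j' ≤ j) :
    ∀ x ∈ (π.drop j).head?, x < v := by
  intro x hx
  rw [List.head?_drop, Option.mem_def, List.getElem?_eq_some_iff] at hx
  obtain ⟨hj, rfl⟩ := hx
  by_contra! hle
  refine absurd (hmax (j + 1) (by omega) fun m hm hmj => ?_) (by omega)
  rcases hmj.lt_or_eq with hmj | rfl
  · exact hmin m hm (by omega)
  · rwa [ent_succ π hj]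

theorem stmt1_general (n : ℕ) (π : List ℕ) (hπ : IsPermOf n π) (i j : ℕ)
    (hi : 1 < i) (hij : i ≤ j) (hjn : j ≤ n)
    (hmin : ∀ m, 1 ≤ m → m ≤ j → ent π i ≤ ent π m)
    (hmax : ∀ j', j' ≤ n → (∀ m, 1 ≤ m → m ≤ j' → ent π i ≤ ent π m) → j' ≤ j) :
    ent (s132 π) (j - 1) = ent π i := by
  have hlen : π.length = n := by simpa using hπ.length_eq
  have hnodup : π.Nodup := hπ.nodup_iff.2 (List.nodup_range.map (add_left_injective 1))
  obtain ⟨pre, mid, hsplit, hpre⟩ :=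
    π.exists_take_eq_append_getElem_cons (k := i - 1) (m := j) (by omega) (by omega)
  rw [← ent_succ π (by omega), Nat.sub_add_cancel hi.le] at hsplit
  have hgt : ∀ y ∈ pre ++ mid, ent π i < y := by
    have hnd := hsplit ▸ hnodup.sublist (List.take_sublist j π)
    rw [List.nodup_middle, List.nodup_cons] at hnd
    refine fun y hy => (le_of_mem_take hmin y ?_).lt_of_ne fun h => hnd.1 (h ▸ hy)
    rw [hsplit]
    simp only [List.mem_append, List.mem_cons] at hy ⊢
    tauto
  obtain ⟨u, t, hrun, hu⟩ := exists_sortRun_eq_append_cons (pre := pre)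
    (by rintro rfl; simp at hpre; omega) (fun x hx => hgt x (List.mem_append_left _ hx))
    (fun x hx => hgt x (List.mem_append_right _ hx)) (lt_of_mem_head?_drop hlen.le hmin hmax)
  have hs : s132 π = u ++ ent π i :: t := by
    show sortRun avoided132 π [] [] = _
    rw [← hrun, ← hsplit, List.take_append_drop]
  have hj : (π.take j).length = j := List.length_take_of_le (by omega)
  rw [hsplit] at hj
  simp only [List.length_append, List.length_cons] at hj
  rw [hs, ent, show j - 1 - 1 = u.length by omega]
  simp

/-- if `π_i` (i > 1) is a ltr-min and `j ≤ n` is the largest index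
with `π_i = min(π_1,…,π_j)`, then `s_{123,132}(π)_{j-1} = π_i`. -/
theorem stmt1 (n : ℕ) (π : List ℕ) (hπ : IsPermOf n π) (i j : ℕ)
    (hi : 1 < i) (hltr : IsLtrMin π i) (hij : i ≤ j) (hjn : j ≤ n)
    (hmin : ∀ m, 1 ≤ m → m ≤ j → ent π i ≤ ent π m)
    (hmax : ∀ j', j' ≤ n → (∀ m, 1 ≤ m → m ≤ j' → ent π i ≤ ent π m) → j' ≤ j) :
    ent (s132 π) (j - 1) = ent π i :=
  stmt1_general n π hπ i j hi hij hjn hmin hmax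
end

section
/- Suppose π ∈ Sₙ has two valley-blocks occupying positions i through j and positions j+2 through k (with a single entry π_{j+1} between them). Then s_{123,132}(π)_{j−1} = π_{j+1}. -/
open scoped Classical

/-!
While a valley-block is read, each entry is smaller than everything read before it, so it
cannot sit on two distinct larger entries without forming a `123` or `132`: pushing it pops
every entry of the stack but the bottom one. Hence after `π_j` the stack is `π_j` over at most
one older entry, and `j - 2` entries have been output. As `π_j < π_{j+1}`, the entry `π_{j+1}` is
pushed without creating a pattern, and `π_{j+2}`, again a new minimum, pops `π_{j+1}` first,
making it the next output entry.
-/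

abbrev StackAvoids (T : List (List ℕ)) (s : List ℕ) : Prop :=
  T.all (fun p => !containsPat s p)

theorem sortRun_cons_of_stackAvoids {T : List (List ℕ)} {x : ℕ} {r s o : List ℕ}
    (h : StackAvoids T (x :: s)) :
    sortRun T (x :: r) s o = sortRun T r (x :: s) o := by
  rw [sortRun.eq_def]; simp [h]

theorem sortRun_cons_cons_of_not_stackAvoids {T : List (List ℕ)} {x y : ℕ} {r s o : List ℕ}
    (h : ¬ StackAvoids T (x :: y :: s)) :
    sortRun T (x :: r) (y :: s) o = sortRun T (x :: r) s (o ++ [y]) := by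
  rw [sortRun.eq_def]; simp [h]

theorem sortRun_cons_nil {T : List (List ℕ)} {x : ℕ} {r o : List ℕ} :
    sortRun T (x :: r) [] o = sortRun T r [x] o := by
  rw [sortRun.eq_def]; dsimp only; split <;> rfl

theorem sortRun_eq_append (T : List (List ℕ)) (inp s o : List ℕ) :
    sortRun T inp s o = o ++ sortRun T inp s [] := by
  suffices key : ∀ o o', sortRun T inp s (o' ++ o) = o' ++ sortRun T inp s o by
    simpa using key [] o
  intro o
  induction inp, s, o using sortRun.induct T with
  | case1 s o => intro o'; simp [sortRun]
  | case2 x r s o h ih =>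
    intro o'
    rw [sortRun_cons_of_stackAvoids h, sortRun_cons_of_stackAvoids h, ih]
  | case3 x r o _ ih => intro o'; rw [sortRun_cons_nil, sortRun_cons_nil, ih]
  | case4 x r o y s h ih =>
    intro o'
    rw [sortRun_cons_cons_of_not_stackAvoids h, sortRun_cons_cons_of_not_stackAvoids h,
      List.append_assoc, ih]

theorem exists_sortRun_cons_eq_s3 (T : List (List ℕ)) (x : ℕ) (r s o : List ℕ) :
    ∃ s₁ s₂, s₁ ++ s₂ = s ∧ sortRun T (x :: r) s o = sortRun T r (x :: s₂) (o ++ s₁) := by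
  induction s generalizing o with
  | nil => exact ⟨[], [], rfl, by simp [sortRun_cons_nil]⟩
  | cons y s ih =>
    by_cases h : StackAvoids T (x :: y :: s)
    · exact ⟨[], y :: s, rfl, by simp [sortRun_cons_of_stackAvoids h]⟩
    · obtain ⟨s₁, s₂, rfl, hrun⟩ := ih (o ++ [y])
      exact ⟨y :: s₁, s₂, rfl, by simp [sortRun_cons_cons_of_not_stackAvoids h, hrun]⟩

theorem drop_eq_ent_cons {π : List ℕ} {t : ℕ} (ht : t < π.length) :
    π.drop t = ent π (t + 1) :: π.drop (t + 1) := by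
  rw [List.drop_eq_getElem_cons ht]
  simp [ent, List.getD, ht]

theorem take_succ_eq_append_ent {π : List ℕ} {t : ℕ} (ht : t < π.length) :
    π.take (t + 1) = π.take t ++ [ent π (t + 1)] := by
  rw [List.take_add_one]
  simp [ent, List.getD, ht]

theorem exists_ent_eq_of_mem_take {π : List ℕ} {t y : ℕ} (hy : y ∈ π.take t) :
    ∃ m, 1 ≤ m ∧ m ≤ t ∧ ent π m = y := by
  obtain ⟨m, hm, rfl⟩ := List.getElem_of_mem hy
  simp only [List.length_take, lt_min_iff] at hm
  exact ⟨m + 1, by omega, by omega, by simp [ent, List.getD, hm.2]⟩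

theorem ent_append_cons {o w : List ℕ} {a m : ℕ} (hm : m - 1 = o.length) :
    ent (o ++ a :: w) m = a := by
  simp [ent, hm, List.getD]

def Reaches (T : List (List ℕ)) (π : List ℕ) (t : ℕ) (s o : List ℕ) : Prop :=
  sortRun T π [] [] = sortRun T (π.drop t) s o ∧ (o ++ s).Perm (π.take t)

theorem reaches_zero (T : List (List ℕ)) (π : List ℕ) : Reaches T π 0 [] [] := by
  simp [Reaches]

namespace Reaches

variable {T : List (List ℕ)} {π s o : List ℕ} {t : ℕ}

theorem succ (h : Reaches T π t s o) (ht : t < π.length) {s₁ s₂ : List ℕ} (hs : s₁ ++ s₂ = s)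
    (hrun : sortRun T (ent π (t + 1) :: π.drop (t + 1)) s o =
      sortRun T (π.drop (t + 1)) (ent π (t + 1) :: s₂) (o ++ s₁)) :
    Reaches T π (t + 1) (ent π (t + 1) :: s₂) (o ++ s₁) := by
  refine ⟨by rw [h.1, drop_eq_ent_cons ht, hrun], ?_⟩
  subst hs
  rw [take_succ_eq_append_ent ht]
  have hmid : List.Perm (o ++ s₁ ++ ent π (t + 1) :: s₂) (o ++ (s₁ ++ s₂) ++ [ent π (t + 1)]) := by
    rw [← List.append_assoc]
    exact List.perm_middle.trans (List.perm_append_singleton _ _).symm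
  exact hmid.trans (h.2.append_right _)

theorem succ_of_stackAvoids (h : Reaches T π t s o) (ht : t < π.length)
    (hx : StackAvoids T (ent π (t + 1) :: s)) :
    Reaches T π (t + 1) (ent π (t + 1) :: s) o := by
  simpa using h.succ ht (List.nil_append s) (by simpa using sortRun_cons_of_stackAvoids hx)

theorem sortT_eq (h : Reaches T π t s o) : sortT T π = o ++ sortRun T (π.drop t) s [] := by
  rw [sortT, h.1, sortRun_eq_append]

end Reaches

theorem exists_reaches_ne_nil (T : List (List ℕ)) (π : List ℕ) {t : ℕ} (ht : t ≤ π.length) :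
    ∃ s o, Reaches T π t s o ∧ (0 < t → s ≠ []) := by
  induction t with
  | zero => exact ⟨[], [], reaches_zero T π, by simp⟩
  | succ t ih =>
    obtain ⟨s, o, h, -⟩ := ih (by omega)
    obtain ⟨s₁, s₂, hs, hrun⟩ := exists_sortRun_cons_eq_s3 T (ent π (t + 1)) (π.drop (t + 1)) s o
    exact ⟨_, _, h.succ (by omega) hs hrun, by simp⟩

abbrev pats132 : List (List ℕ) := [[1, 2, 3], [1, 3, 2]]

theorem containsPat_eq_false_of_length_lt {l p : List ℕ} (h : l.length < p.length) :
    containsPat l p = false := by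
  simp only [containsPat, List.any_eq_false, List.mem_sublists]
  intro t ht hiso
  simp only [isoBool, Bool.and_eq_true, beq_iff_eq] at hiso
  have := ht.length_le
  omega

theorem containsPat_of_sublist {t l p : List ℕ} (hsub : t.Sublist l) (h : containsPat t p) :
    containsPat l p := by
  simp only [containsPat, List.any_eq_true, List.mem_sublists] at h ⊢
  obtain ⟨t', ht', hiso⟩ := h
  exact ⟨t', ht'.trans hsub, hiso⟩

theorem StackAvoids.sublist {T : List (List ℕ)} {t l : List ℕ} (h : StackAvoids T l)
    (hsub : t.Sublist l) : StackAvoids T t := by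
  simp only [StackAvoids, List.all_eq_true, Bool.not_eq_eq_eq_not, Bool.not_true] at h ⊢
  exact fun p hp => Bool.eq_false_iff.mpr fun hc => by
    simpa [containsPat_of_sublist hsub hc] using h p hp

theorem stackAvoids_of_length_le_two {s : List ℕ} (h : s.length ≤ 2) : StackAvoids pats132 s := by
  simp [containsPat_eq_false_of_length_lt (l := s) (p := [1, 2, 3]) (by simp; omega),
    containsPat_eq_false_of_length_lt (l := s) (p := [1, 3, 2]) (by simp; omega)]

theorem stackAvoids_cons_cons {x a : ℕ} {u : List ℕ} (h : a < x) (hu : u.length ≤ 1) :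
    StackAvoids pats132 (x :: a :: u) := by
  match u, hu with
  | [], _ => exact stackAvoids_of_length_le_two (by simp)
  | [b], _ =>
    simp [containsPat, List.sublists, isoBool, List.range_succ]
    omega

theorem not_stackAvoids_of_sublist {x a b : ℕ} {s : List ℕ} (hsub : [a, b].Sublist s)
    (ha : x < a) (hb : x < b) (hab : a ≠ b) : ¬ StackAvoids pats132 (x :: s) := by
  have h3 : ¬ StackAvoids pats132 [x, a, b] := by
    rcases hab.lt_or_gt with hab | hab <;>
    · simp [containsPat, List.sublists, isoBool, List.range_succ]
      omega
  exact fun h => h3 (h.sublist (hsub.cons_cons x))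

theorem sortRun_cons_of_forall_lt {x : ℕ} {r s o : List ℕ} (hs : ∀ y ∈ s, x < y)
    (hnd : s.Nodup) :
    sortRun pats132 (x :: r) s o =
      sortRun pats132 r (x :: s.getLast?.toList) (o ++ s.dropLast) := by
  induction s generalizing o with
  | nil => simp [sortRun_cons_nil]
  | cons a s ih =>
    cases s with
    | nil =>
      simp [sortRun_cons_of_stackAvoids (stackAvoids_of_length_le_two (s := [x, a]) (by simp))]
    | cons b s =>
      have hab : a ≠ b := fun h => by simp [h] at hnd
      have hpop : ¬ StackAvoids pats132 (x :: a :: b :: s) :=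
        not_stackAvoids_of_sublist (by simp) (hs a (by simp)) (hs b (by simp)) hab
      rw [sortRun_cons_cons_of_not_stackAvoids hpop, ih (fun y hy => hs y (by simp_all)) hnd.of_cons]
      simp

namespace Reaches

variable {π s o : List ℕ} {t : ℕ}

theorem succ_of_forall_lt (hnd : π.Nodup) (h : Reaches pats132 π t s o) (ht : t < π.length)
    (hx : ∀ y ∈ π.take t, ent π (t + 1) < y) :
    Reaches pats132 π (t + 1) (ent π (t + 1) :: s.getLast?.toList) (o ++ s.dropLast) := by
  have hs : ∀ y ∈ s, ent π (t + 1) < y := fun y hy =>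
    hx y (h.2.subset (List.mem_append_right o hy))
  have hsnd : s.Nodup := (h.2.nodup_iff.mpr (hnd.sublist (List.take_sublist t π))).of_append_right
  exact h.succ ht (by rw [List.dropLast_eq_take, List.take_append_getLast?])
    (sortRun_cons_of_forall_lt hs hsnd)

end Reaches

theorem IsValley.ent_lt_succ {π : List ℕ} {j : ℕ} (h : IsValley π j) (hj : j + 1 ≤ π.length) :
    ent π j < ent π (j + 1) := by
  obtain ⟨⟨-, -, hmin⟩, hnext, -⟩ := h
  by_contra hle
  exact hnext hj ⟨by omega, hj, fun m hm hmj => by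
    rcases Nat.lt_or_ge m (j + 1) with hm' | hm'
    · exact (Nat.le_of_not_lt hle).trans (hmin m hm (by omega))
    · rw [show m = j + 1 by omega]⟩

theorem IsValleyBlock.ent_lt {π : List ℕ} {i d : ℕ} (h : IsValleyBlock π i d) {t : ℕ}
    (hit : i ≤ t) (hti : t ≤ i + d) {m : ℕ} (hm : 1 ≤ m) (hmt : m < t) : ent π t < ent π m := by
  obtain ⟨-, -, -, hdec, hmin⟩ := h
  induction t, hit using Nat.le_induction generalizing m with
  | base => exact hmin m hm hmt
  | succ t hit ih =>
    have hstep := hdec t hit (by omega)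
    rcases Nat.lt_or_ge m t with hmt' | hmt'
    · exact hstep.trans (ih (by omega) hm hmt')
    · rwa [show m = t by omega]

theorem IsValleyBlock.ent_lt_of_mem_take {π : List ℕ} {i d : ℕ} (h : IsValleyBlock π i d) {t : ℕ}
    (hit : i ≤ t) (hti : t ≤ i + d) {y : ℕ} (hy : y ∈ π.take (t - 1)) : ent π t < y := by
  obtain ⟨m, hm, hmt, rfl⟩ := exists_ent_eq_of_mem_take hy
  exact h.ent_lt hit hti hm (by omega)

theorem IsValleyBlock.exists_reaches {π : List ℕ} {i d : ℕ} (hnd : π.Nodup)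
    (h : IsValleyBlock π i d) {t : ℕ} (hit : i ≤ t) (hti : t ≤ i + d) :
    ∃ u o, Reaches pats132 π t (ent π t :: u) o ∧ u.length ≤ 1 ∧ o.length = t - 2 := by
  have hi : 1 ≤ i := h.1
  have hlen : i + d ≤ π.length := h.2.1
  induction t, hit using Nat.le_induction with
  | base =>
    obtain ⟨s, o, hr, hne⟩ := exists_reaches_ne_nil pats132 π (t := i - 1) (by omega)
    have hstep := hr.succ_of_forall_lt hnd (by omega)
      (fun y hy => h.ent_lt_of_mem_take le_rfl (by omega) hy)
    rw [Nat.sub_add_cancel hi] at hstep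
    refine ⟨_, _, hstep, Option.length_toList_le, ?_⟩
    have hperm := hr.2.length_eq
    have hs : 0 < i - 1 → 0 < s.length := fun hi => List.length_pos_iff.mpr (hne hi)
    simp only [List.length_append, List.length_dropLast, List.length_take] at hperm ⊢
    omega
  | succ t hit ih =>
    obtain ⟨u, o, hr, hu, ho⟩ := ih (by omega)
    have hstep := hr.succ_of_forall_lt hnd (by omega)
      (fun y hy => h.ent_lt_of_mem_take (by omega) hti (by simpa using hy))
    refine ⟨_, _, hstep, Option.length_toList_le, ?_⟩
    have hperm := hr.2.length_eq
    simp only [List.length_append, List.length_cons, List.length_dropLast, List.length_take]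
      at hperm ⊢
    omega

theorem stmt3_general (n : ℕ) (π : List ℕ) (hπ : IsPermOf n π) (i j k : ℕ)
    (hij : i ≤ j)
    (h1 : IsValleyBlock π i (j - i)) (h2 : IsValleyBlock π (j + 2) (k - (j + 2))) :
    ent (s132 π) (j - 1) = ent π (j + 1) := by
  have hnd : π.Nodup := hπ.nodup_iff.mpr (List.nodup_range.map Nat.succ_injective)
  have hlen : j + 2 ≤ π.length := by have := h2.2.1; omega
  have hvalley : IsValley π j := by simpa [Nat.add_sub_cancel' hij] using h1.2.2.1
  obtain ⟨u, o, hreach, hu, ho⟩ := h1.exists_reaches hnd hij (by omega)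
  have hpush := hreach.succ_of_stackAvoids (by omega)
    (stackAvoids_cons_cons (hvalley.ent_lt_succ (by omega)) hu)
  have hpop := hpush.succ_of_forall_lt hnd (by omega)
    (fun y hy => h2.ent_lt_of_mem_take le_rfl (by omega) hy)
  rw [s132, hpop.sortT_eq, List.dropLast_cons_cons, List.append_assoc, List.cons_append]
  -- for `j = 1` both sides of `j - 1 - 1 = o.length` are `0`, and `ent _ 0` is the first entry
  exact ent_append_cons (by omega)

/-- if positions `i,…,j` and `j+2,…,k` are two valley-blocks of
`π` with a single entry `π_{j+1}` between them, then
`s_{123,132}(π)_{j-1} = π_{j+1}`. -/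
theorem stmt3 (n : ℕ) (π : List ℕ) (hπ : IsPermOf n π) (i j k : ℕ)
    (hij : i ≤ j) (hjk : j + 2 ≤ k)
    (h1 : IsValleyBlock π i (j - i)) (h2 : IsValleyBlock π (j + 2) (k - (j + 2))) :
    ent (s132 π) (j - 1) = ent π (j + 1) :=
  stmt3_general n π hπ i j k hij h1 h2
end
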